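/- arXiv:1412.5824 — 2 statements merged into one kernel-verified Lean document; each statement's English description precedes it below -/
import Mathlib

section
/- Let l > 0 and let Ā_l = {z ∈ ℂ : e^{-l} ≤ |z| ≤ 1}. Let α and β be two circle arcs contained in Ā_l with the same endpoints, one on each boundary circle: α(0) = β(0) with |α(0)| = e^{-l}, and α(1) = β(1) with |α(1)| = 1. Let φ_α and φ_β be argument lifts of α and β, and set Δα = φ_α(1) - φ_α(0), Δβ = φ_β(1) - φ_β(0). Then Δα - Δβ is an integer multiple of 2π, both Δα and Δβ lie in [-π, π], and consequently either Δα = Δβ, or {Δα, Δβ} = {π, -π}. (This encodes that two circle arcs with the same endpoints on the two boundary components are homotopic rel endpoints unless the endpoints form a singular pair, in which case the two arcs can represent exactly two distinct classes.) -/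
/-!
Two argument lifts of a nonvanishing path differ by a continuous function with values in
`2πℤ`, hence by a constant: the increment does not depend on the lift, and for two paths with
common endpoints the increments differ by an element of `2πℤ`.

For the bound, write the arc as `u ↦ c + r e^{iu}` with `u` between `θ₀` and `θ₁`. Then
`|z|² = |c|² + r² + 2|c| r cos (u - arg c)`, and `c ≠ 0` since the arc meets two different
circles about `0`. As the modulus is smallest at `θ₀` and largest at `θ₁`, so is
`cos (u - arg c)`. A parameter `u` strictly between them with `u - arg c ∈ πℤ` would be a global
extremum of the cosine, so `θ₁` or `θ₀` would lie at distance at least `2π` from it, which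
`|θ₁ - θ₀| ≤ 2π` rules out. Hence `u - arg c` stays in some `[kπ, (k+1)π]`: the arc lies in a
closed half-plane bounded by a line through `0`, where a rotated principal argument is a lift
with values in an interval of length `π`.
-/

open Set

/-- The circle arc `t ↦ c + r·exp(i((1-t)θ₀ + tθ₁))`. -/
noncomputable def circleArc (c : ℂ) (r θ₀ θ₁ : ℝ) (t : ℝ) : ℂ :=
  c + (r : ℂ) * Complex.exp (Complex.I * (((1 - t) * θ₀ + t * θ₁ : ℝ) : ℂ))

/-- `φ` is a continuous argument lift of the path `γ` on `[0,1]`. -/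
def IsArgLift (γ : ℝ → ℂ) (φ : ℝ → ℝ) : Prop :=
  ContinuousOn φ (Set.Icc 0 1) ∧
  ∀ t ∈ Set.Icc (0 : ℝ) 1,
    γ t = (‖γ t‖ : ℂ) * Complex.exp (Complex.I * (φ t : ℂ))

open Real

lemma sub_mem_zmultiples_of_eq_norm_mul_exp {z : ℂ} (hz : z ≠ 0) {a b : ℝ}
    (ha : z = ‖z‖ * Complex.exp (Complex.I * a)) (hb : z = ‖z‖ * Complex.exp (Complex.I * b)) :
    a - b ∈ AddSubgroup.zmultiples (2 * π) := by
  have hexp : Circle.exp a = Circle.exp b := by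
    ext
    rw [Circle.coe_exp, Circle.coe_exp, mul_comm _ Complex.I, mul_comm _ Complex.I]
    exact mul_left_cancel₀ (by simpa using hz) (ha.symm.trans hb)
  obtain ⟨m, hm⟩ := Circle.exp_eq_exp.mp hexp
  exact ⟨m, by simp only [zsmul_eq_mul]; linarith⟩

lemma eq_norm_mul_exp_arg_mul_sub_arg (z : ℂ) {ω : ℂ} (hω : ω ≠ 0) :
    z = ‖z‖ * Complex.exp (Complex.I * ↑(Complex.arg (z * ω) - Complex.arg ω)) := by
  apply mul_right_cancel₀ hω
  calc z * ω = ‖z * ω‖ * Complex.exp (Complex.arg (z * ω) * Complex.I) :=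
        (Complex.norm_mul_exp_arg_mul_I _).symm
    _ = ‖z‖ * Complex.exp (Complex.I * ↑(Complex.arg (z * ω) - Complex.arg ω)) *
          (‖ω‖ * Complex.exp (Complex.arg ω * Complex.I)) := by
      rw [norm_mul, Complex.ofReal_mul, mul_mul_mul_comm, ← Complex.exp_add]
      push_cast; ring_nf
    _ = _ := by rw [Complex.norm_mul_exp_arg_mul_I]

lemma Complex.mem_slitPlane_of_re_nonneg {z : ℂ} (hz : z ≠ 0) (hre : 0 ≤ z.re) :
    z ∈ Complex.slitPlane := by
  rcases hre.lt_or_eq with h | h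
  · exact Or.inl h
  · exact Or.inr fun him => hz (Complex.ext h.symm him)

namespace IsArgLift

variable {γ : ℝ → ℂ} {φ ψ : ℝ → ℝ}

theorem increment_eq (hne : ∀ t ∈ Icc (0 : ℝ) 1, γ t ≠ 0) (hφ : IsArgLift γ φ)
    (hψ : IsArgLift γ ψ) : φ 1 - φ 0 = ψ 1 - ψ 0 := by
  have hconst := isPreconnected_Icc.constant_of_mapsTo
    (isDiscrete_iff_discreteTopology.mpr
      (inferInstanceAs (DiscreteTopology (AddSubgroup.zmultiples (2 * π))))) (hφ.1.sub hψ.1)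
    (fun t ht => sub_mem_zmultiples_of_eq_norm_mul_exp (hne t ht) (hφ.2 t ht) (hψ.2 t ht))
    (left_mem_Icc.mpr zero_le_one) (right_mem_Icc.mpr zero_le_one)
  simp only [Pi.sub_apply] at hconst
  linarith

theorem increment_mem_Icc_of_re_mul_nonneg {ω : ℂ} (hγ : ContinuousOn γ (Icc 0 1))
    (hne : ∀ t ∈ Icc (0 : ℝ) 1, γ t ≠ 0) (hω : ω ≠ 0)
    (hre : ∀ t ∈ Icc (0 : ℝ) 1, 0 ≤ (γ t * ω).re) (hφ : IsArgLift γ φ) :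
    φ 1 - φ 0 ∈ Icc (-π) π := by
  have harg : ContinuousOn (fun t => Complex.arg (γ t * ω)) (Icc 0 1) := fun t ht =>
    (Complex.continuousAt_arg (Complex.mem_slitPlane_of_re_nonneg
      (mul_ne_zero (hne t ht) hω) (hre t ht))).comp_continuousWithinAt (f := fun s => γ s * ω)
        ((hγ t ht).mul continuousWithinAt_const)
  have hL : IsArgLift γ fun t => Complex.arg (γ t * ω) - Complex.arg ω :=
    ⟨harg.sub continuousOn_const, fun t _ => eq_norm_mul_exp_arg_mul_sub_arg _ hω⟩
  rw [hφ.increment_eq hne hL]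
  have h0 := abs_le.mp (Complex.abs_arg_le_pi_div_two_iff.mpr
    (hre 0 (left_mem_Icc.mpr zero_le_one)))
  have h1 := abs_le.mp (Complex.abs_arg_le_pi_div_two_iff.mpr
    (hre 1 (right_mem_Icc.mpr zero_le_one)))
  constructor <;> linarith [h0.1, h0.2, h1.1, h1.2]

end IsArgLift

lemma two_pi_le_abs_sub_of_cos_eq_one {x y : ℝ} (hx : cos x = 1) (hy : cos y = 1) (hxy : x ≠ y) :
    2 * π ≤ |x - y| := by
  obtain ⟨m, rfl⟩ := (cos_eq_one_iff x).mp hx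
  obtain ⟨n, rfl⟩ := (cos_eq_one_iff y).mp hy
  have hmn : (1 : ℝ) ≤ |(m : ℝ) - n| := by
    exact_mod_cast Int.one_le_abs (sub_ne_zero.mpr fun h => hxy (by rw [h]))
  rw [← sub_mul, abs_mul, abs_of_pos two_pi_pos]
  nlinarith [pi_pos]

lemma exists_uIcc_subset_Icc_int_mul_pi {s₀ s₁ : ℝ} (hlen : |s₁ - s₀| ≤ 2 * π)
    (hcos : ∀ s ∈ uIcc s₀ s₁, cos s₀ ≤ cos s ∧ cos s ≤ cos s₁) :
    ∃ k : ℤ, uIcc s₀ s₁ ⊆ Icc (k * π) ((k + 1) * π) := by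
  set k := ⌊min s₀ s₁ / π⌋
  refine ⟨k, Icc_subset_Icc ((le_div_iff₀ pi_pos).mp (Int.floor_le _)) ?_⟩
  by_contra! hv
  set v := ((k : ℝ) + 1) * π
  have hmin : min s₀ s₁ < v := (div_lt_iff₀ pi_pos).mp (Int.lt_floor_add_one _)
  have hvmem : v ∈ uIcc s₀ s₁ := ⟨hmin.le, hv.le⟩
  have hnear : ∀ s ∈ ({s₀, s₁} : Set ℝ), s ≠ v ∧ |s - v| < 2 * π := by
    rw [abs_le] at hlen
    rw [min_lt_iff] at hmin
    rw [lt_max_iff] at hv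
    rintro s (rfl | rfl) <;> rcases hmin with h | h <;> rcases hv with h' | h' <;>
      exact ⟨by linarith, abs_sub_lt_iff.mpr ⟨by linarith, by linarith⟩⟩
  have hcos_v : cos v = 1 ∨ cos v = -1 := by
    have hsin : sin v = 0 := by simpa using sin_int_mul_pi (k + 1)
    rw [← sq_eq_one_iff, ← sin_sq_add_cos_sq v, hsin]
    ring
  rcases hcos_v with h | h
  · have h₁ : cos s₁ = 1 := le_antisymm (cos_le_one _) (h ▸ (hcos v hvmem).2)
    have hs₁ := hnear s₁ (by simp)
    linarith [two_pi_le_abs_sub_of_cos_eq_one h₁ h hs₁.1]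
  · have h₀ : cos (s₀ + π) = 1 := by
      rw [cos_add_pi, le_antisymm ((hcos v hvmem).1.trans h.le) (neg_one_le_cos _), neg_neg]
    have hs₀ := hnear s₀ (by simp)
    have := two_pi_le_abs_sub_of_cos_eq_one h₀ (by rw [cos_add_pi, h, neg_neg])
      fun e => hs₀.1 (by linarith)
    rw [add_sub_add_right_eq_sub] at this
    linarith

lemma re_circleMap_mul_exp_neg (c : ℂ) (r u α : ℝ) :
    (circleMap c r u * Complex.exp (-α * Complex.I)).re =
      ‖c‖ * cos (Complex.arg c - α) + r * cos (u - α) := by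
  conv_lhs => rw [circleMap, ← Complex.norm_mul_exp_arg_mul_I c]
  have : ((‖c‖ : ℂ) * Complex.exp (Complex.arg c * Complex.I) +
      r * Complex.exp (u * Complex.I)) * Complex.exp (-α * Complex.I) =
      ‖c‖ * Complex.exp ((Complex.arg c - α : ℝ) * Complex.I) +
        r * Complex.exp ((u - α : ℝ) * Complex.I) := by
    push_cast
    simp only [sub_eq_add_neg, add_mul, Complex.exp_add]
    ring
  rw [this, Complex.add_re, Complex.re_ofReal_mul, Complex.re_ofReal_mul,
    Complex.exp_ofReal_mul_I_re, Complex.exp_ofReal_mul_I_re]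

lemma norm_circleMap_sq (c : ℂ) (r u : ℝ) :
    ‖circleMap c r u‖ ^ 2 = ‖c‖ ^ 2 + r ^ 2 + 2 * ‖c‖ * r * cos (u - Complex.arg c) := by
  conv_lhs => rw [circleMap, ← Complex.norm_mul_exp_arg_mul_I c]
  rw [Complex.sq_norm, Complex.normSq_apply]
  simp only [Complex.add_re, Complex.add_im, Complex.re_ofReal_mul, Complex.im_ofReal_mul,
    Complex.exp_ofReal_mul_I_re, Complex.exp_ofReal_mul_I_im]
  rw [cos_sub]
  linear_combination ‖c‖ ^ 2 * sin_sq_add_cos_sq (Complex.arg c) + r ^ 2 * sin_sq_add_cos_sq u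

lemma exists_re_circleMap_mul_nonneg {c : ℂ} (hc : c ≠ 0) {r θ₀ θ₁ : ℝ} (hr : 0 < r)
    (hθ : |θ₁ - θ₀| ≤ 2 * π)
    (hnorm : ∀ u ∈ uIcc θ₀ θ₁,
      ‖circleMap c r θ₀‖ ≤ ‖circleMap c r u‖ ∧ ‖circleMap c r u‖ ≤ ‖circleMap c r θ₁‖) :
    ∃ ω : ℂ, ω ≠ 0 ∧ ∀ u ∈ uIcc θ₀ θ₁, 0 ≤ (circleMap c r u * ω).re := by
  set χ := Complex.arg c
  have hcr : 0 < 2 * ‖c‖ * r := by have := norm_pos_iff.mpr hc; positivity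
  have hcos_le : ∀ u v, ‖circleMap c r u‖ ≤ ‖circleMap c r v‖ → cos (u - χ) ≤ cos (v - χ) := by
    intro u v h
    have := pow_le_pow_left₀ (norm_nonneg _) h 2
    rw [norm_circleMap_sq, norm_circleMap_sq] at this
    exact le_of_mul_le_mul_left (by linarith) hcr
  have hshift : ∀ u ∈ uIcc θ₀ θ₁, u - χ ∈ uIcc (θ₀ - χ) (θ₁ - χ) := fun u hu =>
    image_sub_const_uIcc χ θ₀ θ₁ ▸ mem_image_of_mem _ hu
  obtain ⟨k, hk⟩ := exists_uIcc_subset_Icc_int_mul_pi (s₀ := θ₀ - χ) (s₁ := θ₁ - χ)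
    (by rwa [sub_sub_sub_cancel_right]) fun s hs => by
      rw [← image_sub_const_uIcc] at hs
      obtain ⟨u, hu, rfl⟩ := hs
      exact ⟨hcos_le _ _ (hnorm u hu).1, hcos_le _ _ (hnorm u hu).2⟩
  refine ⟨Complex.exp (-(χ + k * π + π / 2 : ℝ) * Complex.I), Complex.exp_ne_zero _,
    fun u hu => ?_⟩
  have hu' := hk (hshift u hu)
  have h₁ : cos (χ - (χ + k * π + π / 2)) = 0 := by
    rw [show χ - (χ + k * π + π / 2) = -(k * π + π / 2) by ring, cos_neg, cos_add_pi_div_two,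
      sin_int_mul_pi, neg_zero]
  have h₂ : cos (u - (χ + k * π + π / 2)) = sin (u - χ - k * π) := by
    rw [← cos_sub_pi_div_two]; ring_nf
  rw [re_circleMap_mul_exp_neg, h₁, h₂, mul_zero, zero_add]
  exact mul_nonneg hr.le
    (sin_nonneg_of_nonneg_of_le_pi (by linarith [hu'.1]) (by linarith [hu'.2]))

lemma circleArc_eq_circleMap (c : ℂ) (r θ₀ θ₁ t : ℝ) :
    circleArc c r θ₀ θ₁ t = circleMap c r ((1 - t) * θ₀ + t * θ₁) := by
  rw [circleArc, circleMap, mul_comm Complex.I]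

lemma uIcc_eq_image_Icc (a b : ℝ) : uIcc a b = (fun t => (1 - t) * a + t * b) '' Icc 0 1 := by
  rw [← segment_eq_uIcc, segment_eq_image]
  rfl

theorem IsArgLift.circleArc_increment_mem_Icc {c : ℂ} {r θ₀ θ₁ a b : ℝ} {φ : ℝ → ℝ}
    (hr : 0 < r) (hθ : |θ₁ - θ₀| ≤ 2 * π) (ha : 0 < a) (hab : a < b)
    (hmem : ∀ t ∈ Icc (0 : ℝ) 1, a ≤ ‖circleArc c r θ₀ θ₁ t‖ ∧ ‖circleArc c r θ₀ θ₁ t‖ ≤ b)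
    (h0 : ‖circleArc c r θ₀ θ₁ 0‖ = a) (h1 : ‖circleArc c r θ₀ θ₁ 1‖ = b)
    (hφ : IsArgLift (circleArc c r θ₀ θ₁) φ) : φ 1 - φ 0 ∈ Icc (-π) π := by
  have hc : c ≠ 0 := by
    rintro rfl
    simp only [circleArc, zero_add, norm_mul, Complex.norm_exp_I_mul_ofReal, mul_one] at h0 h1
    linarith
  have e0 : circleArc c r θ₀ θ₁ 0 = circleMap c r θ₀ := by simp [circleArc_eq_circleMap]
  have e1 : circleArc c r θ₀ θ₁ 1 = circleMap c r θ₁ := by simp [circleArc_eq_circleMap]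
  obtain ⟨ω, hω, hre⟩ := exists_re_circleMap_mul_nonneg hc hr hθ (by
    rw [uIcc_eq_image_Icc]
    rintro _ ⟨t, ht, rfl⟩
    rw [← e0, ← e1, h0, h1, ← circleArc_eq_circleMap]
    exact hmem t ht)
  refine hφ.increment_mem_Icc_of_re_mul_nonneg (by unfold circleArc; fun_prop)
    (fun t ht => norm_pos_iff.mp (ha.trans_le (hmem t ht).1)) hω fun t ht => ?_
  rw [circleArc_eq_circleMap]
  exact hre _ (uIcc_eq_image_Icc θ₀ θ₁ ▸ mem_image_of_mem _ ht)

lemma eq_or_pi_neg_pi_of_sub_mem_zmultiples {x y : ℝ} (hx : x ∈ Icc (-π) π)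
    (hy : y ∈ Icc (-π) π) (hxy : x - y ∈ AddSubgroup.zmultiples (2 * π)) :
    x = y ∨ (x = π ∧ y = -π) ∨ (x = -π ∧ y = π) := by
  obtain ⟨n, hn⟩ := hxy
  simp only [zsmul_eq_mul] at hn
  have hn₁ : n ≤ 1 := by
    have : (n : ℝ) ≤ 1 := le_of_mul_le_mul_right (by linarith [hx.2, hy.1]) two_pi_pos
    exact_mod_cast this
  have hn₂ : -1 ≤ n := by
    have : (-1 : ℝ) ≤ n := le_of_mul_le_mul_right (by linarith [hx.1, hy.2]) two_pi_pos
    exact_mod_cast this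
  interval_cases n <;> push_cast at hn
  · exact Or.inr (Or.inr ⟨by linarith [hx.1, hy.2], by linarith [hx.1, hy.2]⟩)
  · exact Or.inl (by linarith)
  · exact Or.inr (Or.inl ⟨by linarith [hx.2, hy.1], by linarith [hx.2, hy.1]⟩)

/-- Two circle arcs in the closed annulus `{e^{-l} ≤ |z| ≤ 1}` with the same
endpoints, one on each boundary circle, have argument increments differing by a
multiple of `2π`, each lying in `[-π, π]`; hence the increments are equal or
form the pair `{π, -π}`. -/
theorem circleArcs_same_endpoints (l : ℝ) (hl : 0 < l)
    (cα : ℂ) (rα θα₀ θα₁ : ℝ) (hrα : 0 < rα) (hθα : |θα₁ - θα₀| ≤ 2 * Real.pi)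
    (cβ : ℂ) (rβ θβ₀ θβ₁ : ℝ) (hrβ : 0 < rβ) (hθβ : |θβ₁ - θβ₀| ≤ 2 * Real.pi)
    (hmemα : ∀ t ∈ Set.Icc (0 : ℝ) 1,
      Real.exp (-l) ≤ ‖circleArc cα rα θα₀ θα₁ t‖ ∧
      ‖circleArc cα rα θα₀ θα₁ t‖ ≤ 1)
    (hmemβ : ∀ t ∈ Set.Icc (0 : ℝ) 1,
      Real.exp (-l) ≤ ‖circleArc cβ rβ θβ₀ θβ₁ t‖ ∧
      ‖circleArc cβ rβ θβ₀ θβ₁ t‖ ≤ 1)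
    (hsame0 : circleArc cα rα θα₀ θα₁ 0 = circleArc cβ rβ θβ₀ θβ₁ 0)
    (hsame1 : circleArc cα rα θα₀ θα₁ 1 = circleArc cβ rβ θβ₀ θβ₁ 1)
    (h0 : ‖circleArc cα rα θα₀ θα₁ 0‖ = Real.exp (-l))
    (h1 : ‖circleArc cα rα θα₀ θα₁ 1‖ = 1)
    (φα φβ : ℝ → ℝ)
    (hφα : IsArgLift (circleArc cα rα θα₀ θα₁) φα)
    (hφβ : IsArgLift (circleArc cβ rβ θβ₀ θβ₁) φβ) :
    (∃ n : ℤ, (φα 1 - φα 0) - (φβ 1 - φβ 0) = n * (2 * Real.pi)) ∧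
    (φα 1 - φα 0) ∈ Set.Icc (-Real.pi) Real.pi ∧
    (φβ 1 - φβ 0) ∈ Set.Icc (-Real.pi) Real.pi ∧
    (φα 1 - φα 0 = φβ 1 - φβ 0 ∨
      (φα 1 - φα 0 = Real.pi ∧ φβ 1 - φβ 0 = -Real.pi) ∨
      (φα 1 - φα 0 = -Real.pi ∧ φβ 1 - φβ 0 = Real.pi)) := by
  have hpos : 0 < Real.exp (-l) := Real.exp_pos _
  have hout : Real.exp (-l) < 1 := Real.exp_lt_one_iff.mpr (by linarith)
  have hIα := hφα.circleArc_increment_mem_Icc hrα hθα hpos hout hmemα h0 h1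
  rw [hsame0] at h0
  rw [hsame1] at h1
  have hIβ := hφβ.circleArc_increment_mem_Icc hrβ hθβ hpos hout hmemβ h0 h1
  have hends : ∀ t ∈ Icc (0 : ℝ) 1, circleArc cα rα θα₀ θα₁ t = circleArc cβ rβ θβ₀ θβ₁ t →
      circleArc cβ rβ θβ₀ θβ₁ t ≠ 0 → φα t - φβ t ∈ AddSubgroup.zmultiples (2 * π) :=
    fun t ht hsame hne =>
      sub_mem_zmultiples_of_eq_norm_mul_exp hne (hsame ▸ hφα.2 t ht) (hφβ.2 t ht)
  have hdiff : (φα 1 - φα 0) - (φβ 1 - φβ 0) ∈ AddSubgroup.zmultiples (2 * π) := by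
    rw [sub_sub_sub_comm]
    refine sub_mem (hends 1 (right_mem_Icc.mpr zero_le_one) hsame1 ?_)
      (hends 0 (left_mem_Icc.mpr zero_le_one) hsame0 ?_)
    · rw [← norm_pos_iff, h1]; exact one_pos
    · rw [← norm_pos_iff, h0]; exact hpos
  refine ⟨?_, hIα, hIβ, eq_or_pi_neg_pi_of_sub_mem_zmultiples hIα hIβ hdiff⟩
  obtain ⟨n, hn⟩ := hdiff
  exact ⟨n, by simpa only [zsmul_eq_mul] using hn.symm⟩
end

section
/- Let l > 0 and let Ā_l = {z ∈ ℂ : e^{-l} ≤ |z| ≤ 1}. Let γ be a circle arc contained in Ā_l with |γ(0)| = e^{-l} and |γ(1)| = 1, and let φ be an argument lift of γ. If |φ(1) - φ(0)| = π (i.e. the winding number of γ attains the extremal value ±1/2), then γ is half of a circle enclosing 0 joining the point of minimal modulus to the point of maximal modulus on that circle, and in particular the endpoints form a singular pair: γ(1) = -e^{l}·γ(0). -/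
/-!
The argument lift gives `γ 1 = -e^l γ 0`. Rotating by `arg c`, with
`ψ(t) = θ₀ - arg c + t (θ₁ - θ₀)`, we get `‖γ t‖² = ‖c‖² + r² + 2 ‖c‖ r cos ψ(t)`, which the annulus
condition makes minimal at `t = 0` and maximal at `t = 1`. The first-order conditions at these
endpoints give `sin ψ(0) (θ₁ - θ₀) ≤ 0` and `sin ψ(1) (θ₁ - θ₀) ≤ 0`, while the imaginary parts of
`γ 1 = -e^l γ 0` give `sin ψ(1) = -e^l sin ψ(0)`. Hence both sines vanish: the endpoints are the
nearest and the farthest point of the circle from `0`, so they are antipodal and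
`cos (θ₁ - θ₀) = -1`; the real parts then read `‖c‖ + r = e^l (r - ‖c‖)`, so `‖c‖ < r`.
-/

open Real Set
open Complex (I arg)

theorem HasDerivAt.mul_nonneg_of_forall_le {f : ℝ → ℝ} {f' x Δ : ℝ} (hf : HasDerivAt f f' x)
    (hmin : ∀ t ∈ Icc (0 : ℝ) 1, f x ≤ f (x + t * Δ)) : 0 ≤ f' * Δ := by
  have hseg : IsMinOn f (segment ℝ x (x + Δ)) x := by
    rintro _ ⟨a, t, ha, ht, hat, rfl⟩
    obtain rfl : a = 1 - t := by linarith
    have hy : (1 - t) • x + t • (x + Δ) = x + t * Δ := by simp only [smul_eq_mul]; ring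
    show f x ≤ f _
    rw [hy]
    exact hmin t ⟨ht, by linarith⟩
  have := hseg.localize.hasFDerivWithinAt_nonneg hf.hasFDerivAt.hasFDerivWithinAt
    (mem_posTangentConeAt_of_segment_subset subset_rfl)
  simpa [mul_comm] using this

theorem exp_mul_I_eq_neg_of_abs_sub_eq_pi {φ ψ : ℝ} (h : |ψ - φ| = π) :
    Complex.exp (I * ψ) = -Complex.exp (I * φ) := by
  rcases abs_eq pi_pos.le |>.mp h with h | h
  · rw [show ψ = φ + π by linarith, Complex.ofReal_add, mul_add, mul_comm _ (π : ℂ),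
      Complex.exp_add_pi_mul_I]
  · rw [show ψ = φ - π by linarith, Complex.ofReal_sub, mul_sub, mul_comm _ (π : ℂ),
      Complex.exp_sub_pi_mul_I]

theorem IsArgLift.norm_mul_eq_neg_of_abs_sub_eq_pi {γ : ℝ → ℂ} {φ : ℝ → ℝ}
    (hφ : IsArgLift γ φ) (hπ : |φ 1 - φ 0| = π) :
    (‖γ 0‖ : ℂ) * γ 1 = -((‖γ 1‖ : ℂ) * γ 0) := by
  linear_combination (‖γ 0‖ : ℂ) * hφ.2 1 (right_mem_Icc.2 zero_le_one) +
    (‖γ 1‖ : ℂ) * hφ.2 0 (left_mem_Icc.2 zero_le_one) +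
    (‖γ 0‖ * ‖γ 1‖ : ℂ) * exp_mul_I_eq_neg_of_abs_sub_eq_pi hπ

theorem circleArc_eq_exp_arg_mul (c : ℂ) (r θ₀ θ₁ t : ℝ) :
    circleArc c r θ₀ θ₁ t = Complex.exp (I * arg c) *
      (‖c‖ + r * Complex.exp (I * (θ₀ - arg c + t * (θ₁ - θ₀) : ℝ))) := by
  have hθ : I * (((1 - t) * θ₀ + t * θ₁ : ℝ) : ℂ) =
      I * arg c + I * (θ₀ - arg c + t * (θ₁ - θ₀) : ℝ) := by
    push_cast; ring
  have hc : (‖c‖ : ℂ) * Complex.exp (I * arg c) = c := by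
    rw [mul_comm I]
    exact Complex.norm_mul_exp_arg_mul_I c
  rw [circleArc, hθ, Complex.exp_add]
  linear_combination -hc

theorem circleArc_eq_neg_mul_iff {c : ℂ} {r θ₀ θ₁ L s t : ℝ} :
    circleArc c r θ₀ θ₁ s = -(L : ℂ) * circleArc c r θ₀ θ₁ t ↔
      (‖c‖ : ℂ) + r * Complex.exp (I * (θ₀ - arg c + s * (θ₁ - θ₀) : ℝ)) =
        -(L : ℂ) * (‖c‖ + r * Complex.exp (I * (θ₀ - arg c + t * (θ₁ - θ₀) : ℝ))) := by
  rw [circleArc_eq_exp_arg_mul, circleArc_eq_exp_arg_mul, mul_left_comm,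
    mul_right_inj' (Complex.exp_ne_zero _)]

theorem re_ofReal_add_mul_exp (m r ψ : ℝ) :
    ((m : ℂ) + r * Complex.exp (I * ψ)).re = m + r * cos ψ := by
  simp [mul_comm I, Complex.exp_ofReal_mul_I_re]

theorem im_ofReal_add_mul_exp (m r ψ : ℝ) :
    ((m : ℂ) + r * Complex.exp (I * ψ)).im = r * sin ψ := by
  simp [mul_comm I, Complex.exp_ofReal_mul_I_im]

theorem norm_sq_ofReal_add_mul_exp (m r ψ : ℝ) :
    ‖(m : ℂ) + r * Complex.exp (I * ψ)‖ ^ 2 = m ^ 2 + r ^ 2 + 2 * m * r * cos ψ := by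
  rw [Complex.sq_norm, Complex.normSq_apply, re_ofReal_add_mul_exp, im_ofReal_add_mul_exp]
  linear_combination r ^ 2 * sin_sq_add_cos_sq ψ

theorem norm_sq_circleArc (c : ℂ) (r θ₀ θ₁ t : ℝ) :
    ‖circleArc c r θ₀ θ₁ t‖ ^ 2 =
      ‖c‖ ^ 2 + r ^ 2 + 2 * ‖c‖ * r * cos (θ₀ - arg c + t * (θ₁ - θ₀)) := by
  rw [circleArc_eq_exp_arg_mul, norm_mul, mul_comm I, Complex.norm_exp_ofReal_mul_I,
    one_mul, norm_sq_ofReal_add_mul_exp]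

theorem cos_eq_neg_one_and_cos_add_eq_one {L x Δ : ℝ} (hL : 0 < L)
    (hmin : ∀ t ∈ Icc (0 : ℝ) 1, cos x ≤ cos (x + t * Δ))
    (hmax : ∀ t ∈ Icc (0 : ℝ) 1, cos (x + t * Δ) ≤ cos (x + Δ))
    (hlt : cos x < cos (x + Δ)) (hsin : sin (x + Δ) = -L * sin x) :
    cos x = -1 ∧ cos (x + Δ) = 1 := by
  have hstart : 0 ≤ -sin x * Δ := (hasDerivAt_cos x).mul_nonneg_of_forall_le hmin
  have hend : 0 ≤ -(-sin (x + Δ)) * -Δ := by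
    refine (hasDerivAt_cos (x + Δ)).neg.mul_nonneg_of_forall_le fun t ht => ?_
    have := hmax (1 - t) ⟨by linarith [ht.2], by linarith [ht.1]⟩
    rw [show x + (1 - t) * Δ = x + Δ + t * -Δ by ring] at this
    exact neg_le_neg this
  have hΔ : Δ ≠ 0 := by rintro rfl; simp at hlt
  have hsin0 : sin x = 0 := by
    rw [hsin] at hend
    exact (mul_eq_zero.1 (by nlinarith)).resolve_right hΔ
  have hsin1 : sin (x + Δ) = 0 := by rw [hsin, hsin0, mul_zero]
  rcases sin_eq_zero_iff_cos_eq.1 hsin0 with h0 | h0 <;>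
    rcases sin_eq_zero_iff_cos_eq.1 hsin1 with h1 | h1 <;>
    first | exact ⟨h0, h1⟩ | linarith

theorem abs_eq_pi_of_cos_eq_neg_one {Δ : ℝ} (h : cos Δ = -1) (hΔ : |Δ| ≤ 2 * π) : |Δ| = π := by
  obtain ⟨k, rfl⟩ := cos_eq_neg_one_iff.1 h
  rw [abs_le] at hΔ
  obtain rfl | rfl : k = -1 ∨ k = 0 := by
    have : -2 < k := by exact_mod_cast (by nlinarith [pi_pos] : (-2 : ℝ) < k)
    have : k < 1 := by exact_mod_cast (by nlinarith [pi_pos] : (k : ℝ) < 1)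
    omega
  · rw [show π + ((-1 : ℤ) : ℝ) * (2 * π) = -π by push_cast; ring, abs_neg, abs_of_pos pi_pos]
  · simp [abs_of_pos pi_pos]

theorem circleArc_cos_eq_neg_one_and_norm_lt {c : ℂ} {r θ₀ θ₁ L : ℝ} (hr : 0 < r) (hL : 0 < L)
    (hmin : ∀ t ∈ Icc (0 : ℝ) 1, ‖circleArc c r θ₀ θ₁ 0‖ ≤ ‖circleArc c r θ₀ θ₁ t‖)
    (hmax : ∀ t ∈ Icc (0 : ℝ) 1, ‖circleArc c r θ₀ θ₁ t‖ ≤ ‖circleArc c r θ₀ θ₁ 1‖)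
    (hlt : ‖circleArc c r θ₀ θ₁ 0‖ < ‖circleArc c r θ₀ θ₁ 1‖)
    (hopp : circleArc c r θ₀ θ₁ 1 = -(L : ℂ) * circleArc c r θ₀ θ₁ 0) :
    cos (θ₁ - θ₀) = -1 ∧ ‖c‖ < r := by
  obtain ⟨x, hx⟩ : ∃ x, θ₀ - arg c = x := ⟨_, rfl⟩
  obtain ⟨Δ, hΔ⟩ : ∃ Δ, θ₁ - θ₀ = Δ := ⟨_, rfl⟩
  have hnorm (t : ℝ) : ‖circleArc c r θ₀ θ₁ t‖ ^ 2 =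
      ‖c‖ ^ 2 + r ^ 2 + 2 * ‖c‖ * r * cos (x + t * Δ) := by
    rw [norm_sq_circleArc, hx, hΔ]
  have hrot := circleArc_eq_neg_mul_iff.1 hopp
  rw [hx, hΔ] at hrot
  have hre := congrArg Complex.re hrot
  have him := congrArg Complex.im hrot
  simp only [zero_mul, add_zero, one_mul, ← Complex.ofReal_neg, Complex.re_ofReal_mul,
    Complex.im_ofReal_mul, re_ofReal_add_mul_exp, im_ofReal_add_mul_exp] at hre him
  have hgap : 0 < ‖c‖ * r * (cos (x + Δ) - cos x) := by
    have := pow_lt_pow_left₀ hlt (norm_nonneg _) two_ne_zero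
    rw [hnorm, hnorm, zero_mul, add_zero, one_mul] at this
    linarith
  have hcr : 0 < ‖c‖ * r := by
    refine mul_pos (lt_of_le_of_ne (norm_nonneg c) fun h => ?_) hr
    simp [← h] at hgap
  have hcos_le {s t : ℝ} (h : ‖circleArc c r θ₀ θ₁ s‖ ≤ ‖circleArc c r θ₀ θ₁ t‖) :
      cos (x + s * Δ) ≤ cos (x + t * Δ) := by
    have := pow_le_pow_left₀ (norm_nonneg _) h 2
    rw [hnorm, hnorm] at this
    nlinarith
  obtain ⟨hcos₀, hcos₁⟩ := cos_eq_neg_one_and_cos_add_eq_one hL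
    (fun t ht => by simpa using hcos_le (hmin t ht))
    (fun t ht => by simpa using hcos_le (hmax t ht))
    (sub_pos.1 ((mul_pos_iff_of_pos_left hcr).1 hgap))
    (mul_left_cancel₀ hr.ne' (by linarith))
  constructor
  · have hsin₀ : sin x = 0 := by nlinarith [sin_sq_add_cos_sq x]
    rw [cos_add, hcos₀, hsin₀] at hcos₁
    rw [hΔ]
    linarith
  · rw [hcos₀, hcos₁] at hre
    nlinarith [norm_nonneg c]

/-- If a circle arc in the closed annulus `{e^{-l} ≤ |z| ≤ 1}` joining the two
boundary circles has extremal winding (`|φ(1) - φ(0)| = π`), then it is half of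
a circle enclosing `0` and its endpoints form a singular pair:
`γ(1) = -e^l·γ(0)`. -/
theorem extremal_winding_singularPair (l : ℝ) (hl : 0 < l)
    (c : ℂ) (r θ₀ θ₁ : ℝ) (hr : 0 < r) (hθ : |θ₁ - θ₀| ≤ 2 * Real.pi)
    (hmem : ∀ t ∈ Set.Icc (0 : ℝ) 1,
      Real.exp (-l) ≤ ‖circleArc c r θ₀ θ₁ t‖ ∧
      ‖circleArc c r θ₀ θ₁ t‖ ≤ 1)
    (h0 : ‖circleArc c r θ₀ θ₁ 0‖ = Real.exp (-l))
    (h1 : ‖circleArc c r θ₀ θ₁ 1‖ = 1)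
    (φ : ℝ → ℝ) (hφ : IsArgLift (circleArc c r θ₀ θ₁) φ)
    (hwind : |φ 1 - φ 0| = Real.pi) :
    |θ₁ - θ₀| = Real.pi ∧ ‖c‖ < r ∧
      circleArc c r θ₀ θ₁ 1 = -(Real.exp l : ℂ) * circleArc c r θ₀ θ₁ 0 := by
  have hsing : circleArc c r θ₀ θ₁ 1 = -(exp l : ℂ) * circleArc c r θ₀ θ₁ 0 := by
    have h := hφ.norm_mul_eq_neg_of_abs_sub_eq_pi hwind
    rw [h0, h1, Complex.ofReal_one, one_mul] at h
    have hel : (exp l : ℂ) * (exp (-l) : ℂ) = 1 := by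
      rw [← Complex.ofReal_mul, ← exp_add, add_neg_cancel, exp_zero, Complex.ofReal_one]
    linear_combination (exp l : ℂ) * h - circleArc c r θ₀ θ₁ 1 * hel
  obtain ⟨hcos, hnorm_lt⟩ := circleArc_cos_eq_neg_one_and_norm_lt hr (exp_pos l)
    (fun t ht => by rw [h0]; exact (hmem t ht).1) (fun t ht => by rw [h1]; exact (hmem t ht).2)
    (by rw [h0, h1]; exact exp_lt_one_iff.2 (neg_lt_zero.2 hl)) hsing
  exact ⟨abs_eq_pi_of_cos_eq_neg_one hcos hθ, hnorm_lt, hsing⟩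
end
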